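/- The support functions of the rotated Reuleaux triangles K_{jπ/(3l)}, j = 0,1,…,l-1, are linearly independent in C(S¹) for every l ∈ ℕ; consequently the family {h_{K_α} : α ∈ [0,2π]} spans an infinite-dimensional subspace of C(S¹). -/

import Mathlib

open Metric Set Pointwise Real

/-- Support function of a subset of the plane `ℂ ≅ ℝ²` (with its real inner
product) evaluated at `u`. -/
noncomputable def suppC (Y : Set ℂ) (u : ℂ) : ℝ :=
  sSup ((fun y => (inner ℝ y u : ℝ)) '' Y)

/-- The Reuleaux triangle of width `d`: the intersection of the three closed
discs of radius `d` centered at `(0,0)`, `(d,0)` and `(d/2, d√3/2)`. -/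
noncomputable def reuleaux (d : ℝ) : Set ℂ :=
  closedBall (0 : ℂ) d ∩ closedBall (d : ℂ) d ∩
    closedBall ((d / 2 : ℝ) + (d * Real.sqrt 3 / 2 : ℝ) * Complex.I) d

/-- Counterclockwise rotation by angle `α` about the origin. -/
noncomputable def rot (α : ℝ) (S : Set ℂ) : Set ℂ :=
  (fun z => Complex.exp (α * Complex.I) * z) '' S

/-- The support function of the Reuleaux triangle in direction `e^{iφ}`. -/
noncomputable def HH (d φ : ℝ) : ℝ := suppC (reuleaux d) (Complex.exp (φ * Complex.I))

lemma innerC (z w : ℂ) : (inner ℝ z w : ℝ) = z.re * w.re + z.im * w.im := by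
  rw [Complex.inner, Complex.mul_re, Complex.conj_re, Complex.conj_im]; ring

lemma suppC_eq_of_isGreatest {Y : Set ℂ} {u p : ℂ} (hp : p ∈ Y)
    (hub : ∀ x ∈ Y, (inner ℝ x u : ℝ) ≤ (inner ℝ p u : ℝ)) : suppC Y u = (inner ℝ p u : ℝ) :=
  IsGreatest.csSup_eq ⟨⟨p, hp, rfl⟩, by rintro r ⟨x, hx, rfl⟩; exact hub x hx⟩

lemma suppC_rot (α θ : ℝ) (S : Set ℂ) :
    suppC (rot α S) (Complex.exp (θ * Complex.I))
      = suppC S (Complex.exp ((θ - α) * Complex.I)) := by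
  unfold suppC rot
  rw [Set.image_image]
  congr 1
  apply Set.image_congr
  intro y _
  have h : Complex.exp ((θ - α) * Complex.I)
      = (starRingEnd ℂ) (Complex.exp (α * Complex.I)) * Complex.exp (θ * Complex.I) := by
    rw [← Complex.exp_conj, ← Complex.exp_add]
    congr 1
    simp [Complex.conj_ofReal]
    ring
  rw [h, innerC, innerC]
  simp only [Complex.mul_re, Complex.mul_im, Complex.conj_re, Complex.conj_im]
  ring

lemma mem_reuleaux_iff {d : ℝ} (hd : 0 < d) {z : ℂ} : z ∈ reuleaux d ↔
    z.re ^ 2 + z.im ^ 2 ≤ d ^ 2 ∧ (z.re - d) ^ 2 + z.im ^ 2 ≤ d ^ 2 ∧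
      (z.re - d / 2) ^ 2 + (z.im - d * Real.sqrt 3 / 2) ^ 2 ≤ d ^ 2 := by
  have habs : ∀ w : ℂ, ‖w‖ ≤ d ↔ w.re ^ 2 + w.im ^ 2 ≤ d ^ 2 := by
    intro w
    rw [← pow_le_pow_iff_left₀ (norm_nonneg w) hd.le two_ne_zero,
      Complex.sq_norm, Complex.normSq_apply]
    constructor <;> intro h <;> nlinarith [h]
  simp only [reuleaux, Set.mem_inter_iff, mem_closedBall, Complex.dist_eq, habs]
  constructor
  · rintro ⟨⟨h1, h2⟩, h3⟩
    refine ⟨by simpa using h1, by simpa using h2, ?_⟩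
    · convert h3 using 2 <;> simp
  · rintro ⟨h1, h2, h3⟩
    refine ⟨⟨by simpa using h1, by simpa using h2⟩, ?_⟩
    convert h3 using 2 <;> simp

lemma H_const {d : ℝ} (hd : 0 < d) {θ : ℝ} (h0 : 0 ≤ θ) (h1 : θ ≤ π / 3) : HH d θ = d := by
  have s3 : Real.sqrt 3 ^ 2 = 3 := Real.sq_sqrt (by norm_num)
  have s3' : 0 ≤ Real.sqrt 3 := Real.sqrt_nonneg 3
  have hpyth := Real.sin_sq_add_cos_sq θ
  have hc1 : 1 / 2 ≤ Real.cos θ := by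
    have h := Real.cos_le_cos_of_nonneg_of_le_pi h0 (by linarith [Real.pi_pos]) h1
    rwa [Real.cos_pi_div_three] at h
  have hc2 : 1 / 2 ≤ Real.cos (θ - π / 3) := by
    have h := Real.cos_le_cos_of_nonneg_of_le_pi (by linarith) (by linarith [Real.pi_pos])
      (by linarith : π / 3 - θ ≤ π / 3)
    rw [Real.cos_pi_div_three] at h
    rwa [← Real.cos_neg, neg_sub]
  rw [Real.cos_sub, Real.cos_pi_div_three, Real.sin_pi_div_three] at hc2
  unfold HH
  set u := Complex.exp (θ * Complex.I) with hu
  have hre : u.re = Real.cos θ := Complex.exp_ofReal_mul_I_re θ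
  have him : u.im = Real.sin θ := Complex.exp_ofReal_mul_I_im θ
  have hp : ((d : ℂ) * u) ∈ reuleaux d := by
    rw [mem_reuleaux_iff hd]
    simp only [Complex.mul_re, Complex.mul_im, Complex.ofReal_re, Complex.ofReal_im, hre, him]
    refine ⟨by nlinarith, by nlinarith, by nlinarith⟩
  have h : suppC (reuleaux d) u = (inner ℝ ((d : ℂ) * u) u : ℝ) := by
    apply suppC_eq_of_isGreatest hp
    intro x hx
    rw [mem_reuleaux_iff hd] at hx
    rw [innerC, innerC]
    simp only [Complex.mul_re, Complex.mul_im, Complex.ofReal_re, Complex.ofReal_im, hre, him]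
    nlinarith [hx.1, sq_nonneg (x.re * Real.sin θ - x.im * Real.cos θ),
      sq_nonneg (x.re * Real.cos θ + x.im * Real.sin θ - d)]
  rw [h, innerC]
  simp only [Complex.mul_re, Complex.mul_im, Complex.ofReal_re, Complex.ofReal_im, hre, him]
  nlinarith

lemma H_cos {d : ℝ} (hd : 0 < d) {θ : ℝ} (h0 : -(π / 3) ≤ θ) (h1 : θ ≤ 0) :
    HH d θ = d * Real.cos θ := by
  have s3 : Real.sqrt 3 ^ 2 = 3 := Real.sq_sqrt (by norm_num)
  have s3' : 0 ≤ Real.sqrt 3 := Real.sqrt_nonneg 3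
  have hpyth := Real.sin_sq_add_cos_sq θ
  have hsin : Real.sin θ ≤ 0 := by
    have h : 0 ≤ Real.sin (-θ) := Real.sin_nonneg_of_nonneg_of_le_pi (by linarith)
      (by linarith [Real.pi_pos])
    rw [Real.sin_neg] at h; linarith
  have hlam : 0 ≤ Real.sqrt 3 * Real.cos θ + Real.sin θ := by
    have h : 0 ≤ Real.sin (θ + π / 3) := Real.sin_nonneg_of_nonneg_of_le_pi (by linarith)
      (by linarith [Real.pi_pos])
    rw [Real.sin_add, Real.cos_pi_div_three, Real.sin_pi_div_three] at h
    linarith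
  unfold HH
  set u := Complex.exp (θ * Complex.I) with hu
  have hre : u.re = Real.cos θ := Complex.exp_ofReal_mul_I_re θ
  have him : u.im = Real.sin θ := Complex.exp_ofReal_mul_I_im θ
  have hp : ((d : ℂ)) ∈ reuleaux d := by
    rw [mem_reuleaux_iff hd]
    simp only [Complex.ofReal_re, Complex.ofReal_im]
    refine ⟨by nlinarith, by nlinarith, by nlinarith⟩
  have h : suppC (reuleaux d) u = (inner ℝ ((d : ℂ)) u : ℝ) := by
    apply suppC_eq_of_isGreatest hp
    intro x hx
    rw [mem_reuleaux_iff hd] at hx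
    rw [innerC, innerC]
    simp only [Complex.ofReal_re, Complex.ofReal_im, hre, him]
    obtain ⟨hx1, hx2, hx3⟩ := hx
    have F1 : x.re - d ≤ 0 := by nlinarith
    have F2 : (x.re - d) - Real.sqrt 3 * x.im ≤ 0 := by nlinarith
    have t1 : (Real.sqrt 3 * Real.cos θ + Real.sin θ) * (x.re - d) ≤ 0 :=
      mul_nonpos_of_nonneg_of_nonpos hlam F1
    have t2 : (-Real.sin θ) * ((x.re - d) - Real.sqrt 3 * x.im) ≤ 0 :=
      mul_nonpos_of_nonneg_of_nonpos (by linarith) F2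
    have key : Real.sqrt 3 * ((x.re - d) * Real.cos θ + x.im * Real.sin θ) ≤ 0 := by
      nlinarith [t1, t2]
    nlinarith [key, Real.sqrt_pos.mpr (by norm_num : (0:ℝ) < 3)]
  rw [h, innerC]
  simp only [Complex.ofReal_re, Complex.ofReal_im, hre, him]
  ring

lemma combine {l : ℕ} (g F3 F2 F1 G1 G2 G3 : Fin l → ℝ) (co : ℝ) :
    (∑ j, g j * F3 j) - co * (∑ j, g j * F2 j) + (∑ j, g j * F1 j)
      - ((∑ j, g j * G1 j) - co * (∑ j, g j * G2 j) + (∑ j, g j * G3 j))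
    = ∑ j, g j * ((F3 j - co * F2 j + F1 j) - (G1 j - co * G2 j + G3 j)) := by
  rw [Finset.mul_sum, Finset.mul_sum, ← Finset.sum_sub_distrib, ← Finset.sum_add_distrib,
    ← Finset.sum_sub_distrib, ← Finset.sum_add_distrib, ← Finset.sum_sub_distrib]
  exact Finset.sum_congr rfl (fun j _ => by ring)

set_option maxHeartbeats 1000000 in
/-- the support functions of the rotated Reuleaux triangles
`K_{jπ/(3l)}`, `j = 0,…,l-1`, are linearly independent as functions on the unit
circle, for every `l`; consequently the family `{h_{K_α} : α ∈ [0,2π]}` spans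
an infinite-dimensional subspace. -/
theorem stmt_16 (d : ℝ) (hd : 0 < d) :
    (∀ l : ℕ, 0 < l →
      LinearIndependent ℝ (fun j : Fin l =>
        (fun u : sphere (0 : ℂ) 1 => suppC (rot ((j : ℝ) * π / (3 * (l : ℝ))) (reuleaux d)) u))) ∧
    ¬ Module.Finite ℝ (Submodule.span ℝ (Set.range (fun α : Icc (0 : ℝ) (2 * π) =>
      (fun u : sphere (0 : ℂ) 1 => suppC (rot (α : ℝ) (reuleaux d)) u)))) := by
  have hπ := Real.pi_pos
  have part1 : ∀ l : ℕ, 0 < l →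
      LinearIndependent ℝ (fun j : Fin l =>
        (fun u : sphere (0 : ℂ) 1 => suppC (rot ((j : ℝ) * π / (3 * (l : ℝ))) (reuleaux d)) u)) := by
    intro l hl
    have hl1 : (1 : ℝ) ≤ (l : ℝ) := by exact_mod_cast hl
    have hl0 : (l : ℝ) ≠ 0 := by positivity
    rw [Fintype.linearIndependent_iff]
    intro g hg i
    have hc0 : 0 < π / (24 * (l : ℝ)) := by positivity
    set c : ℝ := π / (24 * (l : ℝ)) with hc
    set A : Fin l → ℝ := fun j => (j : ℝ) * π / (3 * (l : ℝ)) with hA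
    have hAc : ∀ j : Fin l, A j = 8 * (j : ℝ) * c := by
      intro j; rw [hA, hc]; field_simp; ring
    -- pointwise vanishing of the combination
    have hS : ∀ θ : ℝ, ∑ j : Fin l, g j * HH d (θ - A j) = 0 := by
      intro θ
      have hmem : Complex.exp ((θ : ℂ) * Complex.I) ∈ sphere (0 : ℂ) 1 := by
        simp [Complex.norm_exp]
      have h0 := congrFun hg ⟨_, hmem⟩
      simp only [Finset.sum_apply, Pi.smul_apply, smul_eq_mul, Pi.zero_apply] at h0
      rw [← h0]
      apply Finset.sum_congr rfl
      intro j _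
      have h1 := (suppC_rot (A j) θ (reuleaux d)).symm
      rw [show ((θ : ℂ) - (A j : ℂ)) = ((θ - A j : ℝ) : ℂ) by push_cast; ring] at h1
      exact congrArg (fun r => g j * r) h1
    -- values of HH at the sample points
    have hpos : ∀ x : ℝ, 0 ≤ x → x ≤ 8 * (l : ℝ) → HH d (x * c) = d := by
      intro x h1 h2
      apply H_const hd (by positivity)
      calc x * c ≤ 8 * (l : ℝ) * c := by nlinarith
        _ = π / 3 := by rw [hc]; field_simp; ring
    have hneg : ∀ x : ℝ, -(8 * (l : ℝ)) ≤ x → x ≤ 0 → HH d (x * c) = d * Real.cos (x * c) := by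
      intro x h1 h2
      apply H_cos hd _ (by nlinarith)
      have h3 : -(π / 3) = -(8 * (l : ℝ)) * c := by rw [hc]; field_simp; ring
      rw [h3]; nlinarith
    have id1 : ∀ y : ℝ, Real.cos (y + c) + Real.cos (y - c) - 2 * Real.cos c * Real.cos y = 0 := by
      intro y; rw [Real.cos_add, Real.cos_sub]; ring
    -- the second-difference bracket
    have hΦ : ∀ j : Fin l,
        ((HH d ((A i + 3*c) - A j) - 2*Real.cos c * HH d ((A i + 2*c) - A j) + HH d ((A i + 1*c) - A j))
        - (HH d ((A i + (-1)*c) - A j) - 2*Real.cos c * HH d ((A i + (-2)*c) - A j) + HH d ((A i + (-3)*c) - A j)))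
        = if j = i then 2 * d * (1 - Real.cos c) else 0 := by
      intro j
      have hargs : ∀ k : ℝ, (A i + k*c) - A j = (8*(i:ℝ) - 8*(j:ℝ) + k) * c := by
        intro k; rw [hAc i, hAc j]; ring
      have hjl : (j : ℝ) ≤ (l : ℝ) - 1 := by
        have h := j.isLt
        have h' : (j : ℝ) + 1 ≤ (l : ℝ) := by exact_mod_cast Nat.succ_le_of_lt h
        linarith
      have hil : (i : ℝ) ≤ (l : ℝ) - 1 := by
        have h := i.isLt
        have h' : (i : ℝ) + 1 ≤ (l : ℝ) := by exact_mod_cast Nat.succ_le_of_lt h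
        linarith
      have hj0 : (0:ℝ) ≤ (j : ℝ) := Nat.cast_nonneg _
      have hi0 : (0:ℝ) ≤ (i : ℝ) := Nat.cast_nonneg _
      rcases lt_trichotomy (j : ℕ) (i : ℕ) with hji | hji | hji
      · -- j < i : all six points in the constant piece
        have hm : (j : ℝ) + 1 ≤ (i : ℝ) := by exact_mod_cast Nat.succ_le_of_lt hji
        have hne : ¬ (j = i) := by
          intro h; rw [h] at hji; exact lt_irrefl _ hji
        rw [if_neg hne, hargs 3, hargs 2, hargs 1, hargs (-1), hargs (-2), hargs (-3),
          hpos _ (by linarith) (by linarith), hpos _ (by linarith) (by linarith),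
          hpos _ (by linarith) (by linarith), hpos _ (by linarith) (by linarith),
          hpos _ (by linarith) (by linarith), hpos _ (by linarith) (by linarith)]
        ring
      · -- j = i
        have hji' : j = i := Fin.ext hji
        subst hji'
        rw [if_pos rfl, hargs 3, hargs 2, hargs 1, hargs (-1), hargs (-2), hargs (-3)]
        have h8 : (8:ℝ) ≤ 8 * (l:ℝ) := by nlinarith
        rw [hpos (8*(j:ℝ) - 8*(j:ℝ) + 3) (by linarith) (by linarith),
          hpos (8*(j:ℝ) - 8*(j:ℝ) + 2) (by linarith) (by linarith),
          hpos (8*(j:ℝ) - 8*(j:ℝ) + 1) (by linarith) (by linarith),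
          hneg (8*(j:ℝ) - 8*(j:ℝ) + (-1)) (by linarith) (by linarith),
          hneg (8*(j:ℝ) - 8*(j:ℝ) + (-2)) (by linarith) (by linarith),
          hneg (8*(j:ℝ) - 8*(j:ℝ) + (-3)) (by linarith) (by linarith)]
        rw [show (8*(j:ℝ) - 8*(j:ℝ) + (-1)) * c = (8*(j:ℝ) - 8*(j:ℝ) + (-2)) * c + c by ring,
          show (8*(j:ℝ) - 8*(j:ℝ) + (-3)) * c = (8*(j:ℝ) - 8*(j:ℝ) + (-2)) * c - c by ring]
        have h := id1 ((8*(j:ℝ) - 8*(j:ℝ) + (-2)) * c)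
        linear_combination (-d) * h
      · -- i < j : all six points in the cosine piece
        have hm : (i : ℝ) + 1 ≤ (j : ℝ) := by exact_mod_cast Nat.succ_le_of_lt hji
        have hne : ¬ (j = i) := by
          intro h; rw [h] at hji; exact lt_irrefl _ hji
        rw [if_neg hne, hargs 3, hargs 2, hargs 1, hargs (-1), hargs (-2), hargs (-3),
          hneg _ (by linarith) (by linarith), hneg _ (by linarith) (by linarith),
          hneg _ (by linarith) (by linarith), hneg _ (by linarith) (by linarith),
          hneg _ (by linarith) (by linarith), hneg _ (by linarith) (by linarith)]
        rw [show (8*(i:ℝ) - 8*(j:ℝ) + 3) * c = (8*(i:ℝ) - 8*(j:ℝ) + 2) * c + c by ring,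
          show (8*(i:ℝ) - 8*(j:ℝ) + 1) * c = (8*(i:ℝ) - 8*(j:ℝ) + 2) * c - c by ring,
          show (8*(i:ℝ) - 8*(j:ℝ) + (-1)) * c = (8*(i:ℝ) - 8*(j:ℝ) + (-2)) * c + c by ring,
          show (8*(i:ℝ) - 8*(j:ℝ) + (-3)) * c = (8*(i:ℝ) - 8*(j:ℝ) + (-2)) * c - c by ring]
        have g1 := id1 ((8*(i:ℝ) - 8*(j:ℝ) + 2) * c)
        have g2 := id1 ((8*(i:ℝ) - 8*(j:ℝ) + (-2)) * c)
        linear_combination d * g1 - d * g2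
    -- combine everything
    have hcos1 : Real.cos c < 1 := by
      have h : Real.cos c < Real.cos 0 := by
        apply Real.cos_lt_cos_of_nonneg_of_le_pi le_rfl _ hc0
        rw [hc, div_le_iff₀ (by positivity)]
        nlinarith
      rwa [Real.cos_zero] at h
    have hzero : g i * (2 * d * (1 - Real.cos c)) = 0 := by
      calc g i * (2 * d * (1 - Real.cos c))
          = ∑ j : Fin l, g j * (if j = i then 2 * d * (1 - Real.cos c) else 0) := by
            rw [Finset.sum_congr rfl (fun j _ => by
              rw [mul_ite, mul_zero] : ∀ j ∈ Finset.univ, _ = _)]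
            rw [Finset.sum_ite_eq' Finset.univ i (fun j => g j * (2 * d * (1 - Real.cos c)))]
            simp
        _ = ∑ j : Fin l, g j *
            ((HH d ((A i + 3*c) - A j) - 2*Real.cos c * HH d ((A i + 2*c) - A j) + HH d ((A i + 1*c) - A j))
            - (HH d ((A i + (-1)*c) - A j) - 2*Real.cos c * HH d ((A i + (-2)*c) - A j) + HH d ((A i + (-3)*c) - A j))) := by
            exact Finset.sum_congr rfl (fun j _ => by rw [hΦ j])
        _ = (∑ j : Fin l, g j * HH d ((A i + 3*c) - A j))
            - (2*Real.cos c) * (∑ j : Fin l, g j * HH d ((A i + 2*c) - A j))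
            + (∑ j : Fin l, g j * HH d ((A i + 1*c) - A j))
            - ((∑ j : Fin l, g j * HH d ((A i + (-1)*c) - A j))
              - (2*Real.cos c) * (∑ j : Fin l, g j * HH d ((A i + (-2)*c) - A j))
              + (∑ j : Fin l, g j * HH d ((A i + (-3)*c) - A j))) :=
            (combine g _ _ _ _ _ _ (2*Real.cos c)).symm
        _ = 0 := by
            rw [hS (A i + 3*c), hS (A i + 2*c), hS (A i + 1*c),
              hS (A i + (-1)*c), hS (A i + (-2)*c), hS (A i + (-3)*c)]
            ring
    have hfac : 2 * d * (1 - Real.cos c) ≠ 0 := ne_of_gt (by nlinarith [hcos1])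
    rcases mul_eq_zero.mp hzero with h | h
    · exact h
    · exact absurd h hfac
  refine ⟨part1, ?_⟩
  intro hfin
  set p := Submodule.span ℝ (Set.range (fun α : Icc (0 : ℝ) (2 * π) =>
      (fun u : sphere (0 : ℂ) 1 => suppC (rot (α : ℝ) (reuleaux d)) u))) with hp
  set N := Module.finrank ℝ p with hN
  have hmem : ∀ j : Fin (N + 1),
      (fun u : sphere (0 : ℂ) 1 => suppC (rot ((j : ℝ) * π / (3 * ((N + 1 : ℕ) : ℝ))) (reuleaux d)) u) ∈ p := by
    intro j
    apply Submodule.subset_span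
    have hl1 : (1 : ℝ) ≤ ((N + 1 : ℕ) : ℝ) := by exact_mod_cast Nat.succ_le_succ (Nat.zero_le N)
    have hjl : (j : ℝ) ≤ ((N + 1 : ℕ) : ℝ) := by exact_mod_cast j.isLt.le
    have hIcc : (j : ℝ) * π / (3 * ((N + 1 : ℕ) : ℝ)) ∈ Icc (0 : ℝ) (2 * π) := by
      constructor
      · positivity
      · rw [div_le_iff₀ (by positivity)]
        nlinarith [(by positivity : (0:ℝ) ≤ (j:ℝ))]
    exact ⟨⟨_, hIcc⟩, rfl⟩
  have hli := part1 (N + 1) (Nat.succ_pos N)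
  have hli' : LinearIndependent ℝ (fun j : Fin (N + 1) =>
      (⟨(fun u : sphere (0 : ℂ) 1 => suppC (rot ((j : ℝ) * π / (3 * ((N + 1 : ℕ) : ℝ))) (reuleaux d)) u),
        hmem j⟩ : p)) := by
    apply LinearIndependent.of_comp p.subtype
    exact hli
  have hcard := hli'.fintype_card_le_finrank
  simp only [Fintype.card_fin] at hcard
  omega
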